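/- arXiv:2602.16691 — 6 statements merged into one kernel-verified Lean document; each statement's English description precedes it below -/
import Mathlib

section
/- Let T₀ ∈ ℝ, T > 0, Δ ∈ (0,T), and let w : ℝ → ℝ be measurable with 0 ≤ w(t) ≤ 1 for t ∈ [T₀, T₀+T−Δ]. Let a ∈ ℂ with a ≠ 0 and ω ∈ ℂ with Im ω ≤ 0; set y₀(t) := a·exp(−iωt) and z := exp(−iωΔ), so |z| ≤ 1 and (S_Δ y₀)(t) = z·y₀(t). Let ρ : ℝ → ℂ be continuous, set y := y₀ + ρ, assume ‖y₀‖_w > 0, and define ε₀ := ‖ρ‖_w/‖y₀‖_w, ε₁ := ‖S_Δ ρ‖_w/‖y₀‖_w, ε := max(ε₀, ε₁). If ε₀ ≤ 1/4, then ⟨y,y⟩_w ≥ (1 − 2ε₀)·‖y₀‖_w² ≥ (1/2)·‖y₀‖_w² > 0, so the estimator ẑ := ⟨S_Δ y, y⟩_w / ⟨y, y⟩_w is well defined, and |ẑ − z| ≤ (ε₀+ε₁)(1+ε₀)/(1−2ε₀). If moreover ε ≤ 1/8, then |ẑ − z| ≤ 3ε and |ẑ| ≤ |z| + 3ε. -/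
/-!
The weighted form is an `L²` inner product: `⟨f, g⟩_w = ⟪g, f⟫` in `L²` of the measure `w(t) dt`
on `(T₀, T₀ + T - Δ]` (Mathlib's `⟪·, ·⟫` is conjugate-linear in the first slot), so the estimate
is about a Rayleigh quotient in a Hilbert space. For any `y ≠ 0`,
`‖⟪y, v⟫ / ⟪y, y⟫ - z‖ ≤ ‖v - z • y‖ / ‖y‖`. With `v = S_Δ y = z • y₀ + S_Δ ρ` and `y = y₀ + ρ`
the residual is `v - z • y = S_Δ ρ - z • ρ`, of norm at most `(ε₀ + ε₁) ‖y₀‖` because `|z| ≤ 1`,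
while `‖y‖ ≥ (1 - ε₀) ‖y₀‖`. This gives the error bound `(ε₀ + ε₁) / (1 - ε₀)`, which implies
the stated one since `(1 - ε₀) (1 + ε₀) ≥ 1 - 2 ε₀`.
-/

open MeasureTheory Set
open scoped InnerProductSpace

theorem sq_norm_sub_le_sq_norm_add {F : Type*} [SeminormedAddCommGroup F] (x v : F) :
    ‖x‖ ^ 2 - 2 * ‖x‖ * ‖v‖ ≤ ‖x + v‖ ^ 2 := by
  have h := norm_sub_norm_le x (-v)
  rw [norm_neg, sub_neg_eq_add] at h
  rcases le_total ‖x‖ ‖v‖ with hxv | hvx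
  · nlinarith [norm_nonneg x, sq_nonneg ‖x + v‖]
  · nlinarith [mul_self_le_mul_self (sub_nonneg.2 hvx) h, sq_nonneg ‖v‖]

section RayleighQuotient

variable {E : Type*} [NormedAddCommGroup E] [InnerProductSpace ℂ E]

theorem norm_inner_div_inner_self_sub_le {y : E} (hy : y ≠ 0) (v : E) (z : ℂ) :
    ‖⟪y, v⟫_ℂ / ⟪y, y⟫_ℂ - z‖ ≤ ‖v - z • y‖ / ‖y‖ := by
  have hyy : ⟪y, y⟫_ℂ ≠ 0 := inner_self_ne_zero.2 hy
  have hy' : 0 < ‖y‖ := norm_pos_iff.2 hy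
  have hresid : ⟪y, v⟫_ℂ / ⟪y, y⟫_ℂ - z = ⟪y, v - z • y⟫_ℂ / ⟪y, y⟫_ℂ := by
    rw [inner_sub_right, inner_smul_right]
    field_simp
  rw [hresid, norm_div, inner_self_eq_norm_sq_to_K, norm_pow, RCLike.norm_ofReal, abs_norm,
    div_le_div_iff₀ (by positivity) hy']
  calc ‖⟪y, v - z • y⟫_ℂ‖ * ‖y‖ ≤ ‖y‖ * ‖v - z • y‖ * ‖y‖ := by
        gcongr; exact norm_inner_le_norm _ _
    _ = ‖v - z • y‖ * ‖y‖ ^ 2 := by ring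

theorem norm_inner_div_inner_self_sub_le_of_perturbation {y₀ ρ σ : E} {z : ℂ} (hz : ‖z‖ ≤ 1)
    (hρ : ‖ρ‖ < ‖y₀‖) :
    ‖⟪y₀ + ρ, z • y₀ + σ⟫_ℂ / ⟪y₀ + ρ, y₀ + ρ⟫_ℂ - z‖ ≤ (‖ρ‖ + ‖σ‖) / (‖y₀‖ - ‖ρ‖) := by
  have hlow : ‖y₀‖ - ‖ρ‖ ≤ ‖y₀ + ρ‖ := by
    simpa using norm_sub_norm_le y₀ (-ρ)
  have hy : y₀ + ρ ≠ 0 := norm_pos_iff.1 (by linarith)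
  have hresid : ‖z • y₀ + σ - z • (y₀ + ρ)‖ ≤ ‖ρ‖ + ‖σ‖ := by
    rw [smul_add, add_sub_add_left_eq_sub]
    calc ‖σ - z • ρ‖ ≤ ‖σ‖ + ‖z‖ * ‖ρ‖ := by rw [← norm_smul]; exact norm_sub_le _ _
      _ ≤ ‖ρ‖ + ‖σ‖ := by nlinarith [norm_nonneg ρ]
  calc _ ≤ ‖z • y₀ + σ - z • (y₀ + ρ)‖ / ‖y₀ + ρ‖ := norm_inner_div_inner_self_sub_le hy _ z
    _ ≤ (‖ρ‖ + ‖σ‖) / (‖y₀‖ - ‖ρ‖) := by gcongr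

theorem rayleigh_quotient_perturbation_bounds {y₀ ρ σ : E} {z : ℂ} {ε₀ ε₁ ε : ℝ}
    (hz : ‖z‖ ≤ 1) (hy₀ : 0 < ‖y₀‖) (hε₀ : ε₀ = ‖ρ‖ / ‖y₀‖) (hε₁ : ε₁ = ‖σ‖ / ‖y₀‖)
    (hε : ε = max ε₀ ε₁) (hsmall : ε₀ ≤ 1 / 4) :
    ((1 - 2 * ε₀) * ‖y₀‖ ^ 2 ≤ ‖y₀ + ρ‖ ^ 2 ∧
      1 / 2 * ‖y₀‖ ^ 2 ≤ (1 - 2 * ε₀) * ‖y₀‖ ^ 2 ∧ 0 < 1 / 2 * ‖y₀‖ ^ 2) ∧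
    ‖⟪y₀ + ρ, z • y₀ + σ⟫_ℂ / ⟪y₀ + ρ, y₀ + ρ⟫_ℂ - z‖ ≤ (ε₀ + ε₁) * (1 + ε₀) / (1 - 2 * ε₀) ∧
    (ε ≤ 1 / 8 →
      ‖⟪y₀ + ρ, z • y₀ + σ⟫_ℂ / ⟪y₀ + ρ, y₀ + ρ⟫_ℂ - z‖ ≤ 3 * ε ∧
      ‖⟪y₀ + ρ, z • y₀ + σ⟫_ℂ / ⟪y₀ + ρ, y₀ + ρ⟫_ℂ‖ ≤ ‖z‖ + 3 * ε) := by
  have hρ : ‖ρ‖ = ε₀ * ‖y₀‖ := by rw [hε₀]; field_simp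
  have hσ : ‖σ‖ = ε₁ * ‖y₀‖ := by rw [hε₁]; field_simp
  have hε₀0 : 0 ≤ ε₀ := hε₀ ▸ by positivity
  have hε₁0 : 0 ≤ ε₁ := hε₁ ▸ by positivity
  have hmain : ‖⟪y₀ + ρ, z • y₀ + σ⟫_ℂ / ⟪y₀ + ρ, y₀ + ρ⟫_ℂ - z‖
      ≤ (ε₀ + ε₁) * (1 + ε₀) / (1 - 2 * ε₀) :=
    calc _ ≤ (‖ρ‖ + ‖σ‖) / (‖y₀‖ - ‖ρ‖) :=
          norm_inner_div_inner_self_sub_le_of_perturbation hz (by rw [hρ]; nlinarith)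
      _ = (ε₀ + ε₁) / (1 - ε₀) := by
          rw [hρ, hσ, ← add_mul, ← one_sub_mul, mul_div_mul_right _ _ hy₀.ne']
      _ ≤ (ε₀ + ε₁) * (1 + ε₀) / (1 - 2 * ε₀) := by
          rw [div_le_div_iff₀ (by linarith) (by linarith)]
          nlinarith [mul_nonneg (add_nonneg hε₀0 hε₁0) hε₀0]
  refine ⟨⟨?_, by nlinarith, by positivity⟩, hmain, fun hε8 => ?_⟩
  · calc (1 - 2 * ε₀) * ‖y₀‖ ^ 2 = ‖y₀‖ ^ 2 - 2 * ‖y₀‖ * ‖ρ‖ := by rw [hρ]; ring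
      _ ≤ ‖y₀ + ρ‖ ^ 2 := sq_norm_sub_le_sq_norm_add y₀ ρ
  have hε₀ε : ε₀ ≤ ε := hε ▸ le_max_left _ _
  have hε₁ε : ε₁ ≤ ε := hε ▸ le_max_right _ _
  have hcrude : (ε₀ + ε₁) * (1 + ε₀) / (1 - 2 * ε₀) ≤ 3 * ε := by
    rw [div_le_iff₀ (by linarith)]
    nlinarith [mul_nonneg hε₀0 (sub_nonneg.2 hε₁ε)]
  refine ⟨hmain.trans hcrude, ?_⟩
  linarith [norm_le_norm_add_norm_sub' (⟪y₀ + ρ, z • y₀ + σ⟫_ℂ / ⟪y₀ + ρ, y₀ + ρ⟫_ℂ) z]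

end RayleighQuotient

noncomputable def weightedMeasure (w : ℝ → ℝ) (a b : ℝ) : Measure ℝ :=
  (volume.restrict (Ioc a b)).withDensity fun t => ENNReal.ofReal (w t)

theorem Continuous.memLp_restrict_Ioc {E : Type*} [NormedAddCommGroup E] {f : ℝ → E}
    (hf : Continuous f) (p : ENNReal) (a b : ℝ) : MemLp f p (volume.restrict (Ioc a b)) := by
  obtain ⟨C, hC⟩ :=
    (isCompact_Icc (a := a) (b := b)).exists_bound_of_continuousOn hf.continuousOn
  refine MemLp.of_bound hf.aestronglyMeasurable C ?_
  filter_upwards [ae_restrict_mem measurableSet_Ioc] with t ht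
  exact hC t (Ioc_subset_Icc_self ht)

section WeightedMeasure

variable {w : ℝ → ℝ} {a b : ℝ}

theorem weightedMeasure_le (hw : ∀ t ∈ Ioc a b, w t ≤ 1) :
    weightedMeasure w a b ≤ volume.restrict (Ioc a b) := by
  refine (withDensity_mono ?_).trans_eq withDensity_one
  filter_upwards [ae_restrict_mem measurableSet_Ioc] with t ht
  simpa using hw t ht

theorem Continuous.memLp_weightedMeasure {E : Type*} [NormedAddCommGroup E] {f : ℝ → E}
    (hf : Continuous f) (p : ENNReal) (hw : ∀ t ∈ Ioc a b, w t ≤ 1) :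
    MemLp f p (weightedMeasure w a b) :=
  (hf.memLp_restrict_Ioc p a b).mono_measure (weightedMeasure_le hw)

theorem integral_weightedMeasure (hwm : Measurable w) (hw : ∀ t ∈ Ioc a b, 0 ≤ w t)
    {E : Type*} [NormedAddCommGroup E] [NormedSpace ℝ E] (f : ℝ → E) :
    ∫ t, f t ∂weightedMeasure w a b = ∫ t in Ioc a b, w t • f t := by
  rw [weightedMeasure, integral_withDensity_eq_integral_toReal_smul hwm.ennreal_ofReal
    (ae_of_all _ fun _ => ENNReal.ofReal_lt_top)]
  refine setIntegral_congr_fun measurableSet_Ioc fun t ht => ?_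
  rw [ENNReal.toReal_ofReal (hw t ht)]

theorem inner_toLp_weightedMeasure (hab : a ≤ b) (hwm : Measurable w)
    (hw : ∀ t ∈ Ioc a b, 0 ≤ w t) {f g : ℝ → ℂ} (hf : MemLp f 2 (weightedMeasure w a b))
    (hg : MemLp g 2 (weightedMeasure w a b)) :
    ⟪hg.toLp g, hf.toLp f⟫_ℂ = ∫ t in a..b, (w t : ℂ) * f t * (starRingEnd ℂ) (g t) := by
  calc ⟪hg.toLp g, hf.toLp f⟫_ℂ = ∫ t, f t * (starRingEnd ℂ) (g t) ∂weightedMeasure w a b := by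
        refine integral_congr_ae ?_
        filter_upwards [hf.coeFn_toLp, hg.coeFn_toLp] with t hft hgt
        rw [RCLike.inner_apply, hft, hgt]
    _ = ∫ t in a..b, (w t : ℂ) * f t * (starRingEnd ℂ) (g t) := by
        rw [integral_weightedMeasure hwm hw, intervalIntegral.integral_of_le hab]
        congr 1 with t
        rw [Complex.real_smul, mul_assoc]

end WeightedMeasure

theorem Complex.norm_exp_neg_I_mul_mul_le_one {ω : ℂ} (hω : ω.im ≤ 0) {t : ℝ} (ht : 0 ≤ t) :
    ‖Complex.exp (-Complex.I * ω * t)‖ ≤ 1 := by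
  rw [Complex.norm_exp, Real.exp_le_one_iff]
  simpa using mul_nonpos_of_nonpos_of_nonneg hω ht

theorem shift_rayleigh_quotient_stability_general
    (T₀ T Δ : ℝ) (hΔ : 0 < Δ) (hΔT : Δ < T)
    (w : ℝ → ℝ) (hwm : Measurable w)
    (hw : ∀ t ∈ Set.Icc T₀ (T₀ + T - Δ), 0 ≤ w t ∧ w t ≤ 1)
    (a ω : ℂ) (hω : ω.im ≤ 0)
    (ρ : ℝ → ℂ) (hρ : Continuous ρ)
    (y₀ y : ℝ → ℂ)
    (hy₀ : y₀ = fun t : ℝ => a * Complex.exp (-Complex.I * ω * (t : ℂ)))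
    (hy : y = fun t : ℝ => y₀ t + ρ t)
    (z : ℂ) (hz : z = Complex.exp (-Complex.I * ω * (Δ : ℂ)))
    (ip : (ℝ → ℂ) → (ℝ → ℂ) → ℂ)
    (hip : ip = fun f g => ∫ t in T₀..(T₀ + T - Δ),
      ((w t : ℂ) * f t * (starRingEnd ℂ) (g t)))
    (nw : (ℝ → ℂ) → ℝ)
    (hnw : nw = fun f => Real.sqrt (ip f f).re)
    (hy₀pos : 0 < nw y₀)
    (ε₀ ε₁ ε : ℝ)
    (hε₀ : ε₀ = nw ρ / nw y₀)
    (hε₁ : ε₁ = nw (fun t => ρ (t + Δ)) / nw y₀)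
    (hε : ε = max ε₀ ε₁)
    (hsmall : ε₀ ≤ 1 / 4) :
    -- derived normalizations: |z| ≤ 1 and the shift eigenvalue relation
    ‖z‖ ≤ 1 ∧ (∀ t : ℝ, y₀ (t + Δ) = z * y₀ t) ∧
    -- denominator lower bounds: the estimator is well defined
    ((1 - 2 * ε₀) * nw y₀ ^ 2 ≤ (ip y y).re ∧
      (1 / 2) * nw y₀ ^ 2 ≤ (1 - 2 * ε₀) * nw y₀ ^ 2 ∧
      0 < (1 / 2) * nw y₀ ^ 2) ∧
    -- main stability estimate for the shift Rayleigh quotient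
    ‖ip (fun t => y (t + Δ)) y / ip y y - z‖
      ≤ (ε₀ + ε₁) * (1 + ε₀) / (1 - 2 * ε₀) ∧
    -- crude bounds under the stronger smallness assumption
    (ε ≤ 1 / 8 →
      ‖ip (fun t => y (t + Δ)) y / ip y y - z‖ ≤ 3 * ε ∧
      ‖ip (fun t => y (t + Δ)) y / ip y y‖ ≤ ‖z‖ + 3 * ε) := by
  have hmemLp : ∀ {f : ℝ → ℂ}, Continuous f → MemLp f 2 (weightedMeasure w T₀ (T₀ + T - Δ)) :=
    fun hf => hf.memLp_weightedMeasure 2 fun t ht => (hw t (Ioc_subset_Icc_self ht)).2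
  have hip_inner : ∀ {f g : ℝ → ℂ} (hf : Continuous f) (hg : Continuous g),
      ip f g = ⟪(hmemLp hg).toLp g, (hmemLp hf).toLp f⟫_ℂ := fun _ _ => by
    simp only [hip]
    exact (inner_toLp_weightedMeasure (by linarith) hwm
      (fun t ht => (hw t (Ioc_subset_Icc_self ht)).1) _ _).symm
  have hnw_norm : ∀ {f : ℝ → ℂ} (hf : Continuous f), nw f = ‖(hmemLp hf).toLp f‖ := fun hf => by
    simp only [hnw, hip_inner hf hf, norm_eq_sqrt_re_inner (𝕜 := ℂ), RCLike.re_to_complex]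
  have hz1 : ‖z‖ ≤ 1 := hz ▸ Complex.norm_exp_neg_I_mul_mul_le_one hω hΔ.le
  have hshift : ∀ t : ℝ, y₀ (t + Δ) = z * y₀ t := fun t => by
    rw [hy₀, hz]
    push_cast
    rw [mul_add, Complex.exp_add]
    ring
  have hy₀c : Continuous y₀ := by rw [hy₀]; fun_prop
  have hyc : Continuous y := hy ▸ hy₀c.add hρ
  have hσc : Continuous fun t => ρ (t + Δ) := by fun_prop
  have hSyc : Continuous fun t => y (t + Δ) := by fun_prop
  have hY : (hmemLp hyc).toLp y = (hmemLp hy₀c).toLp y₀ + (hmemLp hρ).toLp ρ := by subst hy; rfl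
  have hSY : (hmemLp hSyc).toLp _ = z • (hmemLp hy₀c).toLp y₀ + (hmemLp hσc).toLp _ := by
    rw [← MemLp.toLp_const_smul, ← MemLp.toLp_add]
    exact MemLp.toLp_congr _ _ (ae_of_all _ fun t => by simp [hy, hshift])
  simp only [hnw_norm hρ, hnw_norm hσc, hnw_norm hy₀c] at hε₀ hε₁ hy₀pos ⊢
  rw [hip_inner hSyc hyc, hip_inner hyc hyc, hY, hSY, ← RCLike.re_to_complex, inner_self_eq_norm_sq]
  exact ⟨hz1, hshift, rayleigh_quotient_perturbation_bounds hz1 hy₀pos hε₀ hε₁ hε hsmall⟩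

/-- Stability of the weighted shift Rayleigh quotient estimator for a one-mode
exponential signal with a deterministic residual. -/
theorem shift_rayleigh_quotient_stability
    (T₀ T Δ : ℝ) (hT : 0 < T) (hΔ : 0 < Δ) (hΔT : Δ < T)
    (w : ℝ → ℝ) (hwm : Measurable w)
    (hw : ∀ t ∈ Set.Icc T₀ (T₀ + T - Δ), 0 ≤ w t ∧ w t ≤ 1)
    (a ω : ℂ) (ha : a ≠ 0) (hω : ω.im ≤ 0)
    (ρ : ℝ → ℂ) (hρ : Continuous ρ)
    (y₀ y : ℝ → ℂ)
    (hy₀ : y₀ = fun t : ℝ => a * Complex.exp (-Complex.I * ω * (t : ℂ)))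
    (hy : y = fun t : ℝ => y₀ t + ρ t)
    (z : ℂ) (hz : z = Complex.exp (-Complex.I * ω * (Δ : ℂ)))
    (ip : (ℝ → ℂ) → (ℝ → ℂ) → ℂ)
    (hip : ip = fun f g => ∫ t in T₀..(T₀ + T - Δ),
      ((w t : ℂ) * f t * (starRingEnd ℂ) (g t)))
    (nw : (ℝ → ℂ) → ℝ)
    (hnw : nw = fun f => Real.sqrt (ip f f).re)
    (hy₀pos : 0 < nw y₀)
    (ε₀ ε₁ ε : ℝ)
    (hε₀ : ε₀ = nw ρ / nw y₀)
    (hε₁ : ε₁ = nw (fun t => ρ (t + Δ)) / nw y₀)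
    (hε : ε = max ε₀ ε₁)
    (hsmall : ε₀ ≤ 1 / 4) :
    -- derived normalizations: |z| ≤ 1 and the shift eigenvalue relation
    ‖z‖ ≤ 1 ∧ (∀ t : ℝ, y₀ (t + Δ) = z * y₀ t) ∧
    -- denominator lower bounds: the estimator is well defined
    ((1 - 2 * ε₀) * nw y₀ ^ 2 ≤ (ip y y).re ∧
      (1 / 2) * nw y₀ ^ 2 ≤ (1 - 2 * ε₀) * nw y₀ ^ 2 ∧
      0 < (1 / 2) * nw y₀ ^ 2) ∧
    -- main stability estimate for the shift Rayleigh quotient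
    ‖ip (fun t => y (t + Δ)) y / ip y y - z‖
      ≤ (ε₀ + ε₁) * (1 + ε₀) / (1 - 2 * ε₀) ∧
    -- crude bounds under the stronger smallness assumption
    (ε ≤ 1 / 8 →
      ‖ip (fun t => y (t + Δ)) y / ip y y - z‖ ≤ 3 * ε ∧
      ‖ip (fun t => y (t + Δ)) y / ip y y‖ ≤ ‖z‖ + 3 * ε) :=
  shift_rayleigh_quotient_stability_general T₀ T Δ hΔ hΔT w hwm hw a ω hω ρ hρ y₀ y hy₀ hy z hz ip
    hip nw hnw hy₀pos ε₀ ε₁ ε hε₀ hε₁ hε hsmall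
end

section
/- Let z, ẑ ∈ ℂ with z ≠ 0 and |ẑ − z| ≤ |z|/2, and suppose the closed segment {z + s(ẑ − z) : s ∈ [0,1]} is disjoint from the nonpositive real axis (−∞, 0] ⊂ ℂ. Then ẑ ≠ 0 and |Log ẑ − Log z| ≤ (2/|z|)·|ẑ − z|, where Log denotes the principal branch of the complex logarithm. -/
/-!
Along the segment from `z` to `ẑ` every point `w` lies in the slit plane, where `log` is
holomorphic with derivative `w⁻¹`, and satisfies `‖w‖ ≥ ‖z‖ - ‖ẑ - z‖ ≥ ‖z‖ / 2`. The mean value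
inequality on this convex set bounds `‖log ẑ - log z‖` by `(‖z‖ / 2)⁻¹ * ‖ẑ - z‖`.
-/

open Complex Set

theorem Complex.norm_log_sub_log_le_of_convex {s : Set ℂ} {r : ℝ} (hs : Convex ℝ s)
    (hslit : s ⊆ slitPlane) (hr : 0 < r) (hnorm : ∀ w ∈ s, r ≤ ‖w‖) {a b : ℂ}
    (ha : a ∈ s) (hb : b ∈ s) :
    ‖log b - log a‖ ≤ r⁻¹ * ‖b - a‖ := by
  refine hs.norm_image_sub_le_of_norm_hasDerivWithin_le
    (fun w hw => (hasDerivAt_log (hslit hw)).hasDerivWithinAt) (fun w hw => ?_) ha hb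
  rw [norm_inv]
  exact inv_anti₀ hr (hnorm w hw)

theorem half_norm_le_norm_of_mem_segment {E : Type*} [SeminormedAddCommGroup E]
    [NormedSpace ℝ E] {x y w : E} (hxy : ‖y - x‖ ≤ ‖x‖ / 2) (hw : w ∈ segment ℝ x y) :
    ‖x‖ / 2 ≤ ‖w‖ := by
  have hball : segment ℝ x y ⊆ Metric.closedBall x (‖x‖ / 2) :=
    (convex_closedBall x _).segment_subset (Metric.mem_closedBall_self (by positivity))
      (by rwa [mem_closedBall_iff_norm])
  have hwx : ‖w - x‖ ≤ ‖x‖ / 2 := mem_closedBall_iff_norm.mp (hball hw)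
  have := norm_sub_norm_le x w
  rw [norm_sub_rev] at this
  linarith

theorem Complex.segment_subset_slitPlane {z zhat : ℂ}
    (hseg : ∀ s : ℝ, s ∈ Icc (0 : ℝ) 1 →
      ¬((z + (s : ℂ) * (zhat - z)).im = 0 ∧ (z + (s : ℂ) * (zhat - z)).re ≤ 0)) :
    segment ℝ z zhat ⊆ slitPlane := by
  rw [segment_eq_image']
  rintro _ ⟨s, hs, rfl⟩
  rw [mem_slitPlane_iff, or_iff_not_imp_left, not_lt]
  dsimp only
  rw [real_smul]
  exact fun hre him => hseg s hs ⟨him, hre⟩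

/-- Local Lipschitz control for the principal branch of the complex logarithm
along a segment avoiding the nonpositive real axis. -/
theorem log_local_lipschitz
    (z zhat : ℂ) (hz : z ≠ 0)
    (hclose : ‖zhat - z‖ ≤ ‖z‖ / 2)
    (hseg : ∀ s : ℝ, s ∈ Set.Icc (0 : ℝ) 1 →
      ¬((z + (s : ℂ) * (zhat - z)).im = 0 ∧ (z + (s : ℂ) * (zhat - z)).re ≤ 0)) :
    zhat ≠ 0 ∧
    ‖Complex.log zhat - Complex.log z‖
      ≤ (2 / ‖z‖) * ‖zhat - z‖ := by
  have hr : 0 < ‖z‖ / 2 := by positivity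
  have hnorm := fun w (hw : w ∈ segment ℝ z zhat) => half_norm_le_norm_of_mem_segment hclose hw
  refine ⟨norm_pos_iff.mp (hr.trans_le (hnorm zhat (right_mem_segment ℝ z zhat))), ?_⟩
  rw [← inv_div]
  exact norm_log_sub_log_le_of_convex (convex_segment z zhat) (segment_subset_slitPlane hseg) hr
    hnorm (left_mem_segment ℝ z zhat) (right_mem_segment ℝ z zhat)
end

section
/- For every B ≥ 1 there exist constants c₀ > 0 and C > 0, depending only on B, with the following property. Let a₁, a₂, z₁, z₂ ∈ ℂ satisfy a₁·a₂ ≠ 0, z₁ ≠ z₂, max(|z₁|,|z₂|) ≤ B, and |a₁| + |a₂| ≤ B, and set y_j := a₁·z₁^j + a₂·z₂^j for j = 0,1,2,3. Let η ≥ 0 with η ≤ c₀·|a₁a₂|·|z₁−z₂|⁴, and let ỹ₀, ỹ₁, ỹ₂, ỹ₃ ∈ ℂ with |ỹ_j − y_j| ≤ η for each j. Then Δ̃₀ := ỹ₀ỹ₂ − ỹ₁² satisfies |Δ̃₀| ≥ (1/2)·|a₁a₂|·|z₁−z₂|², and setting s̃₁ := (ỹ₀ỹ₃ − ỹ₁ỹ₂)/Δ̃₀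 and s̃₂ := (ỹ₁ỹ₃ − ỹ₂²)/Δ̃₀, the quadratic polynomial λ² − s̃₁λ + s̃₂ has exactly one root z̃_k in the open disk {λ : |λ − z_k| < |z₁−z₂|/4} for each k ∈ {1,2}, and these roots satisfy |z̃_k − z_k| ≤ C·η/(|a₁a₂|·|z₁−z₂|³) for k = 1,2. -/
/-!
For exact data `y j = a₁ z₁ ^ j + a₂ z₂ ^ j` the three Hankel minors entering Cramer's rule are
`D`, `D (z₁ + z₂)` and `D z₁ z₂` with `D = a₁ a₂ (z₁ - z₂) ^ 2`, so the Prony polynomial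
`Δ₀ x² - Δ₁ x + Δ₂` of the data equals `D (x - z₁) (x - z₂)`. Noise of size `η` moves each minor by
`O(η)`; hence `|Δ̃₀| ≥ |D| / 2`, and the monic quadratic `x² - s̃₁ x + s̃₂` takes values of size
`ε = O(η / |D|)` at both `z₁` and `z₂`. A monic quadratic that is `ε`-small at two points at
distance `δ` with `ε ≤ δ² / 64` has exactly one root within `δ / 4` of each point, at distance at
most `2 ε / δ` from it.
-/

open Polynomial in
theorem IsAlgClosed.exists_quadratic_eq_mul {K : Type*} [Field K] [IsAlgClosed K] (s₁ s₂ : K) :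
    ∃ μ₁ μ₂ : K, ∀ x : K, x ^ 2 - s₁ * x + s₂ = (x - μ₁) * (x - μ₂) := by
  obtain ⟨μ, hμ⟩ := IsAlgClosed.exists_root (C 1 * X ^ 2 + C (-s₁) * X + C s₂)
    (by rw [degree_quadratic one_ne_zero]; decide)
  refine ⟨μ, s₁ - μ, fun x => ?_⟩
  simp only [IsRoot, eval_add, eval_mul, eval_C, eval_pow, eval_X] at hμ
  linear_combination hμ

section Perturbation

variable {R ι : Type*} [NormedRing R] {u v : ι → R} {η M : ℝ}

theorem norm_mul_sub_mul_le (hu : ∀ j, ‖u j - v j‖ ≤ η) (hv : ∀ j, ‖v j‖ ≤ M) (hηM : η ≤ M)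
    (i j : ι) : ‖u i * u j - v i * v j‖ ≤ 3 * M * η := by
  have hη : 0 ≤ η := (norm_nonneg _).trans (hu i)
  calc ‖u i * u j - v i * v j‖
      = ‖(u i - v i) * v j + v i * (u j - v j) + (u i - v i) * (u j - v j)‖ := by
        congr 1; noncomm_ring
    _ ≤ η * M + M * η + η * η := by
        refine norm_add₃_le.trans (add_le_add (add_le_add ?_ ?_) ?_) <;>
          refine (norm_mul_le _ _).trans (mul_le_mul ?_ ?_ (norm_nonneg _) ?_) <;>
          first | exact hu _ | exact hv _ | exact hη | exact hη.trans hηM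
    _ ≤ 3 * M * η := by nlinarith

theorem norm_minor_sub_le (hu : ∀ j, ‖u j - v j‖ ≤ η) (hv : ∀ j, ‖v j‖ ≤ M) (hηM : η ≤ M)
    (i j k l : ι) :
    ‖(u i * u l - u j * u k) - (v i * v l - v j * v k)‖ ≤ 6 * M * η :=
  calc _ = ‖(u i * u l - v i * v l) - (u j * u k - v j * v k)‖ := by congr 1; abel
    _ ≤ 3 * M * η + 3 * M * η :=
        (norm_sub_le _ _).trans (add_le_add (norm_mul_sub_mul_le hu hv hηM i l)
          (norm_mul_sub_mul_le hu hv hηM j k))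
    _ = 6 * M * η := by ring

end Perturbation

section Prony

variable {K : Type*}

def hankelDet [CommRing K] (u : Fin 4 → K) : K :=
  u 0 * u 2 - u 1 ^ 2

/-- Prony's polynomial: the determinant with rows `(u 0, u 1, u 2)`, `(u 1, u 2, u 3)`,
`(1, x, x²)`, expanded along the last row. -/
def pronyPoly [CommRing K] (u : Fin 4 → K) (x : K) : K :=
  hankelDet u * x ^ 2 - (u 0 * u 3 - u 1 * u 2) * x + (u 1 * u 3 - u 2 ^ 2)

theorem hankelDet_twoExp [CommRing K] (a₁ a₂ z₁ z₂ : K) :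
    hankelDet (fun j : Fin 4 => a₁ * z₁ ^ (j : ℕ) + a₂ * z₂ ^ (j : ℕ)) =
      a₁ * a₂ * (z₁ - z₂) ^ 2 := by
  simp only [hankelDet, Fin.coe_ofNat_eq_mod, Nat.reduceMod]
  ring

theorem pronyPoly_twoExp [CommRing K] (a₁ a₂ z₁ z₂ x : K) :
    pronyPoly (fun j : Fin 4 => a₁ * z₁ ^ (j : ℕ) + a₂ * z₂ ^ (j : ℕ)) x =
      a₁ * a₂ * (z₁ - z₂) ^ 2 * ((x - z₁) * (x - z₂)) := by
  simp only [pronyPoly, hankelDet, Fin.coe_ofNat_eq_mod, Nat.reduceMod]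
  ring

theorem pronyPoly_eq_mul [Field K] {u : Fin 4 → K} (hu : hankelDet u ≠ 0) {s₁ s₂ : K}
    (hs₁ : s₁ = (u 0 * u 3 - u 1 * u 2) / hankelDet u)
    (hs₂ : s₂ = (u 1 * u 3 - u 2 ^ 2) / hankelDet u) (x : K) :
    pronyPoly u x = hankelDet u * (x ^ 2 - s₁ * x + s₂) := by
  rw [pronyPoly, hs₁, hs₂]
  field_simp

theorem norm_hankelDet_sub_le [NormedCommRing K] {u v : Fin 4 → K} {η M : ℝ}
    (hu : ∀ j, ‖u j - v j‖ ≤ η) (hv : ∀ j, ‖v j‖ ≤ M) (hηM : η ≤ M) :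
    ‖hankelDet u - hankelDet v‖ ≤ 6 * M * η := by
  simpa only [hankelDet, sq] using norm_minor_sub_le hu hv hηM 0 1 1 2

theorem half_norm_hankelDet_le [NormedCommRing K] {u v : Fin 4 → K} {η M : ℝ}
    (hu : ∀ j, ‖u j - v j‖ ≤ η) (hv : ∀ j, ‖v j‖ ≤ M) (hηM : η ≤ M)
    (hD : 12 * M * η ≤ ‖hankelDet v‖) : ‖hankelDet v‖ / 2 ≤ ‖hankelDet u‖ := by
  have := norm_le_norm_add_norm_sub (hankelDet u) (hankelDet v)
  linarith [norm_hankelDet_sub_le hu hv hηM]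

theorem norm_pronyPoly_sub_le [NormedCommRing K] {u v : Fin 4 → K} {η M R : ℝ}
    (hu : ∀ j, ‖u j - v j‖ ≤ η) (hv : ∀ j, ‖v j‖ ≤ M) (hηM : η ≤ M) (hR : 1 ≤ R) {x : K}
    (hx : ‖x‖ ≤ R) : ‖pronyPoly u x - pronyPoly v x‖ ≤ 18 * M * R ^ 2 * η := by
  have hMη : 0 ≤ 6 * M * η := by
    have hη : 0 ≤ η := (norm_nonneg _).trans (hu 0)
    nlinarith
  have h₀ := norm_hankelDet_sub_le hu hv hηM
  have h₁ := norm_minor_sub_le hu hv hηM 0 1 2 3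
  have h₂ : ‖(u 1 * u 3 - u 2 ^ 2) - (v 1 * v 3 - v 2 ^ 2)‖ ≤ 6 * M * η := by
    simpa only [sq] using norm_minor_sub_le hu hv hηM 1 2 2 3
  calc ‖pronyPoly u x - pronyPoly v x‖
      = ‖(hankelDet u - hankelDet v) * x ^ 2
          - ((u 0 * u 3 - u 1 * u 2) - (v 0 * v 3 - v 1 * v 2)) * x
          + ((u 1 * u 3 - u 2 ^ 2) - (v 1 * v 3 - v 2 ^ 2))‖ := by
        rw [pronyPoly, pronyPoly]; ring_nf
    _ ≤ 6 * M * η * R ^ 2 + 6 * M * η * R + 6 * M * η := by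
        refine (norm_add_le _ _).trans (add_le_add ((norm_sub_le _ _).trans
          (add_le_add ?_ ?_)) h₂)
        · refine (norm_mul_le _ _).trans (mul_le_mul h₀ ?_ (norm_nonneg _) hMη)
          exact (norm_pow_le' x two_pos).trans (by gcongr)
        · exact (norm_mul_le _ _).trans (mul_le_mul h₁ hx (norm_nonneg _) hMη)
    _ ≤ 18 * M * R ^ 2 * η := by
        nlinarith [mul_le_mul_of_nonneg_left (show R ≤ R ^ 2 by nlinarith) hMη,
          mul_le_mul_of_nonneg_left (show 1 ≤ R ^ 2 by nlinarith) hMη]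

theorem norm_quadratic_le_of_pronyPoly_eq_zero [NormedField K] {u v : Fin 4 → K}
    {η M R κ : ℝ} (hu : ∀ j, ‖u j - v j‖ ≤ η) (hv : ∀ j, ‖v j‖ ≤ M) (hηM : η ≤ M) (hR : 1 ≤ R)
    (hκ : 0 < κ) (hΔ : κ ≤ ‖hankelDet u‖) {s₁ s₂ : K}
    (hs₁ : s₁ = (u 0 * u 3 - u 1 * u 2) / hankelDet u)
    (hs₂ : s₂ = (u 1 * u 3 - u 2 ^ 2) / hankelDet u)
    {x : K} (hx : ‖x‖ ≤ R) (hroot : pronyPoly v x = 0) :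
    ‖x ^ 2 - s₁ * x + s₂‖ ≤ 18 * M * R ^ 2 * η / κ := by
  have key := norm_pronyPoly_sub_le hu hv hηM hR hx
  rw [hroot, sub_zero, pronyPoly_eq_mul (norm_pos_iff.mp (hκ.trans_le hΔ)) hs₁ hs₂ x,
    norm_mul] at key
  rw [le_div_iff₀ hκ, mul_comm]
  exact (mul_le_mul_of_nonneg_right hΔ (norm_nonneg _)).trans key

end Prony

section Localization

variable {𝕜 : Type*} [NormedField 𝕜] {z w μ₁ μ₂ : 𝕜} {ε : ℝ}

theorem norm_sub_root_le_of_le (hzw : z ≠ w) (hz : ‖(z - μ₁) * (z - μ₂)‖ ≤ ε)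
    (hw : ‖(w - μ₁) * (w - μ₂)‖ ≤ ε) (hε : ε ≤ ‖z - w‖ ^ 2 / 64)
    (hle : ‖z - μ₁‖ ≤ ‖z - μ₂‖) :
    ‖z - μ₁‖ ≤ 2 * ε / ‖z - w‖ ∧ ‖z - w‖ / 2 ≤ ‖z - μ₂‖ := by
  have hδ : 0 < ‖z - w‖ := norm_pos_iff.mpr (sub_ne_zero.mpr hzw)
  rw [norm_mul] at hz hw
  have tri₁ : ‖z - w‖ ≤ ‖z - μ₁‖ + ‖w - μ₁‖ := by
    simpa only [norm_sub_rev μ₁] using norm_sub_le_norm_sub_add_norm_sub z μ₁ w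
  have tri₂ : ‖z - w‖ ≤ ‖z - μ₂‖ + ‖w - μ₂‖ := by
    simpa only [norm_sub_rev μ₂] using norm_sub_le_norm_sub_add_norm_sub z μ₂ w
  have := norm_nonneg (z - μ₁)
  have := norm_nonneg (w - μ₂)
  -- `‖z - μ₁‖² ≤ ε` puts `μ₁` near `z`, hence far from `w`; then `μ₂` must be near `w`.
  have near : ‖z - μ₁‖ ≤ ‖z - w‖ / 8 := by nlinarith
  have far : ‖z - w‖ / 2 ≤ ‖z - μ₂‖ := by nlinarith
  refine ⟨(le_div_iff₀ hδ).mpr ?_, far⟩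
  nlinarith

theorem exists_unique_root_near [IsAlgClosed 𝕜] {s₁ s₂ : 𝕜} {r : ℝ} (hzw : z ≠ w)
    (hz : ‖z ^ 2 - s₁ * z + s₂‖ ≤ ε) (hw : ‖w ^ 2 - s₁ * w + s₂‖ ≤ ε)
    (hε : ε ≤ ‖z - w‖ ^ 2 / 64) (hr : 2 * ε / ‖z - w‖ ≤ r) :
    ∃ lam : 𝕜, (‖lam - z‖ < ‖z - w‖ / 4 ∧ lam ^ 2 - s₁ * lam + s₂ = 0) ∧
      ‖lam - z‖ ≤ r ∧
      ∀ mu : 𝕜, ‖mu - z‖ < ‖z - w‖ / 4 → mu ^ 2 - s₁ * mu + s₂ = 0 → mu = lam := by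
  obtain ⟨μ₁, μ₂, hfac⟩ := IsAlgClosed.exists_quadratic_eq_mul s₁ s₂
  wlog hle : ‖z - μ₁‖ ≤ ‖z - μ₂‖ generalizing μ₁ μ₂
  · exact this μ₂ μ₁ (fun x => (hfac x).trans (mul_comm _ _)) (le_of_not_ge hle)
  rw [hfac] at hz hw
  obtain ⟨near, far⟩ := norm_sub_root_le_of_le hzw hz hw hε hle
  have hδ : 0 < ‖z - w‖ := norm_pos_iff.mpr (sub_ne_zero.mpr hzw)
  have near' : ‖z - μ₁‖ < ‖z - w‖ / 4 := by
    refine near.trans_lt ((div_lt_iff₀ hδ).mpr ?_)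
    nlinarith
  refine ⟨μ₁, ⟨by rwa [norm_sub_rev], by simp [hfac]⟩, by rw [norm_sub_rev]; exact near.trans hr,
    fun mu hmu hroot => ?_⟩
  rw [hfac, mul_eq_zero, sub_eq_zero, sub_eq_zero] at hroot
  refine hroot.resolve_right ?_
  rintro rfl
  rw [norm_sub_rev] at hmu
  linarith

theorem exists_unique_roots_near [IsAlgClosed 𝕜] {s₁ s₂ : 𝕜} {r : ℝ} (hzw : z ≠ w)
    (hz : ‖z ^ 2 - s₁ * z + s₂‖ ≤ ε) (hw : ‖w ^ 2 - s₁ * w + s₂‖ ≤ ε)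
    (hε : ε ≤ ‖z - w‖ ^ 2 / 64) (hr : 2 * ε / ‖z - w‖ ≤ r) :
    (∃ lam : 𝕜, (‖lam - z‖ < ‖z - w‖ / 4 ∧ lam ^ 2 - s₁ * lam + s₂ = 0) ∧
      ‖lam - z‖ ≤ r ∧
      ∀ mu : 𝕜, ‖mu - z‖ < ‖z - w‖ / 4 → mu ^ 2 - s₁ * mu + s₂ = 0 → mu = lam) ∧
    (∃ lam : 𝕜, (‖lam - w‖ < ‖z - w‖ / 4 ∧ lam ^ 2 - s₁ * lam + s₂ = 0) ∧
      ‖lam - w‖ ≤ r ∧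
      ∀ mu : 𝕜, ‖mu - w‖ < ‖z - w‖ / 4 → mu ^ 2 - s₁ * mu + s₂ = 0 → mu = lam) := by
  refine ⟨exists_unique_root_near hzw hz hw hε hr, ?_⟩
  simpa only [norm_sub_rev w z] using exists_unique_root_near hzw.symm hw hz
    (by rwa [norm_sub_rev]) (by rwa [norm_sub_rev])

end Localization

theorem norm_twoExp_le {R : Type*} [NormedRing R] [NormOneClass R] {a₁ a₂ z₁ z₂ : R} {B : ℝ}
    (hz₁ : ‖z₁‖ ≤ B) (hz₂ : ‖z₂‖ ≤ B) (ha : ‖a₁‖ + ‖a₂‖ ≤ B) (n : ℕ) :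
    ‖a₁ * z₁ ^ n + a₂ * z₂ ^ n‖ ≤ B ^ (n + 1) := by
  have hB : 0 ≤ B := (norm_nonneg _).trans hz₁
  have hpow (z : R) (hz : ‖z‖ ≤ B) : ‖z ^ n‖ ≤ B ^ n :=
    (norm_pow_le z n).trans (pow_le_pow_left₀ (norm_nonneg z) hz n)
  calc ‖a₁ * z₁ ^ n + a₂ * z₂ ^ n‖ ≤ ‖a₁‖ * B ^ n + ‖a₂‖ * B ^ n :=
        (norm_add_le _ _).trans (add_le_add
          ((norm_mul_le _ _).trans (by gcongr; exact hpow z₁ hz₁))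
          ((norm_mul_le _ _).trans (by gcongr; exact hpow z₂ hz₂)))
    _ ≤ B ^ (n + 1) := by rw [← add_mul, pow_succ']; gcongr

theorem prony_noise_bounds {R : Type*} [NormedRing R] {a₁ a₂ z₁ z₂ : R} {B η : ℝ} (hB : 1 ≤ B)
    (hz₁ : ‖z₁‖ ≤ B) (hz₂ : ‖z₂‖ ≤ B) (ha : ‖a₁‖ + ‖a₂‖ ≤ B)
    (hη : η ≤ 1 / (2304 * B ^ 6) * ‖a₁ * a₂‖ * ‖z₁ - z₂‖ ^ 4) :
    2304 * B ^ 6 * η ≤ ‖a₁ * a₂‖ * ‖z₁ - z₂‖ ^ 4 ∧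
      12 * B ^ 4 * η ≤ ‖a₁ * a₂‖ * ‖z₁ - z₂‖ ^ 2 ∧ η ≤ B ^ 4 := by
  set A := ‖a₁ * a₂‖
  set δ := ‖z₁ - z₂‖
  have hη' : 2304 * B ^ 6 * η ≤ A * δ ^ 4 := calc
    2304 * B ^ 6 * η ≤ 2304 * B ^ 6 * (1 / (2304 * B ^ 6) * A * δ ^ 4) := by gcongr
    _ = A * δ ^ 4 := by field_simp
  have hA : A ≤ B ^ 2 :=
    (norm_mul_le _ _).trans (by nlinarith [norm_nonneg a₁, norm_nonneg a₂])
  have hδ : δ ^ 2 ≤ 4 * B ^ 2 := by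
    have := norm_sub_le z₁ z₂
    nlinarith [norm_nonneg (z₁ - z₂)]
  have h576 : 576 * B ^ 4 * η ≤ A * δ ^ 2 := by
    refine le_of_mul_le_mul_left ?_ (by positivity : (0:ℝ) < 4 * B ^ 2)
    nlinarith [mul_le_mul_of_nonneg_left hδ (by positivity : (0:ℝ) ≤ A * δ ^ 2)]
  have hAδ : A * δ ^ 2 ≤ 4 * B ^ 4 := by
    nlinarith [mul_le_mul hA hδ (by positivity) (by positivity)]
  refine ⟨hη', ?_, ?_⟩ <;> nlinarith [one_le_pow₀ (n := 4) hB, show 0 ≤ A * δ ^ 2 by positivity]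

/-- Deterministic four-sample Prony stability for a two-exponential model. -/
theorem four_sample_prony_stability :
    ∀ B : ℝ, 1 ≤ B → ∃ c₀ C : ℝ, 0 < c₀ ∧ 0 < C ∧
      ∀ a₁ a₂ z₁ z₂ : ℂ, a₁ * a₂ ≠ 0 → z₁ ≠ z₂ →
        max (‖z₁‖) (‖z₂‖) ≤ B →
        ‖a₁‖ + ‖a₂‖ ≤ B →
        ∀ η : ℝ, 0 ≤ η → η ≤ c₀ * ‖a₁ * a₂‖ * ‖z₁ - z₂‖ ^ 4 →
        ∀ ty : Fin 4 → ℂ,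
          (∀ j : Fin 4,
            ‖ty j - (a₁ * z₁ ^ (j : ℕ) + a₂ * z₂ ^ (j : ℕ))‖ ≤ η) →
        -- lower bound for the perturbed Hankel determinant
        (1 / 2) * ‖a₁ * a₂‖ * ‖z₁ - z₂‖ ^ 2
            ≤ ‖ty 0 * ty 2 - ty 1 ^ 2‖ ∧
        -- stability of the recovered nodes
        (∀ s₁ s₂ : ℂ,
          s₁ = (ty 0 * ty 3 - ty 1 * ty 2) / (ty 0 * ty 2 - ty 1 ^ 2) →
          s₂ = (ty 1 * ty 3 - ty 2 ^ 2) / (ty 0 * ty 2 - ty 1 ^ 2) →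
          (∃ lam : ℂ,
            (‖lam - z₁‖ < ‖z₁ - z₂‖ / 4 ∧
              lam ^ 2 - s₁ * lam + s₂ = 0) ∧
            ‖lam - z₁‖
              ≤ C * η / (‖a₁ * a₂‖ * ‖z₁ - z₂‖ ^ 3) ∧
            (∀ mu : ℂ, ‖mu - z₁‖ < ‖z₁ - z₂‖ / 4 →
              mu ^ 2 - s₁ * mu + s₂ = 0 → mu = lam)) ∧
          (∃ lam : ℂ,
            (‖lam - z₂‖ < ‖z₁ - z₂‖ / 4 ∧
              lam ^ 2 - s₁ * lam + s₂ = 0) ∧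
            ‖lam - z₂‖
              ≤ C * η / (‖a₁ * a₂‖ * ‖z₁ - z₂‖ ^ 3) ∧
            (∀ mu : ℂ, ‖mu - z₂‖ < ‖z₁ - z₂‖ / 4 →
              mu ^ 2 - s₁ * mu + s₂ = 0 → mu = lam))) := by
  intro B hB
  refine ⟨1 / (2304 * B ^ 6), 72 * B ^ 6, by positivity, by positivity, ?_⟩
  intro a₁ a₂ z₁ z₂ ha hz hzB haB η _ hηc ty hty
  set y : Fin 4 → ℂ := fun j => a₁ * z₁ ^ (j : ℕ) + a₂ * z₂ ^ (j : ℕ)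
  have hz₁ : ‖z₁‖ ≤ B := (le_max_left _ _).trans hzB
  have hz₂ : ‖z₂‖ ≤ B := (le_max_right _ _).trans hzB
  have hy (j : Fin 4) : ‖y j‖ ≤ B ^ 4 :=
    (norm_twoExp_le hz₁ hz₂ haB j).trans (pow_le_pow_right₀ hB (by omega))
  obtain ⟨hηε, hηD, hηM⟩ := prony_noise_bounds hB hz₁ hz₂ haB hηc
  have hD : ‖hankelDet y‖ = ‖a₁ * a₂‖ * ‖z₁ - z₂‖ ^ 2 := by
    rw [hankelDet_twoExp, norm_mul, norm_pow]
  have hΔ := half_norm_hankelDet_le hty hy hηM (hD ▸ hηD)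
  rw [hD] at hΔ
  refine ⟨by rw [hankelDet] at hΔ; linarith, fun s₁ s₂ hs₁ hs₂ => ?_⟩
  have hκ : 0 < ‖a₁ * a₂‖ * ‖z₁ - z₂‖ ^ 2 / 2 := by
    have := norm_pos_iff.mpr ha
    have := norm_pos_iff.mpr (sub_ne_zero.mpr hz)
    positivity
  have hnode (x : ℂ) :=
    norm_quadratic_le_of_pronyPoly_eq_zero (x := x) hty hy hηM hB hκ hΔ hs₁ hs₂
  refine exists_unique_roots_near hz (hnode z₁ hz₁ (by simp [pronyPoly_twoExp]))
    (hnode z₂ hz₂ (by simp [pronyPoly_twoExp])) ?_ (le_of_eq ?_)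
  · rw [div_le_iff₀ hκ]
    linarith
  · field_simp
    ring
end

section
/- Fix n ∈ ℕ and pairwise distinct points Ω₀♯, …, Ω_n♯ ∈ ℂ; set d♯ := min_{j≠k} |Ω_j♯ − Ω_k♯| > 0 and D := max_{j,k} |Ω_j♯ − Ω_k♯|. For each m ∈ {0,…,n} define the Lagrange polynomial G_m(ω) := ∏_{j∈{0,…,n}, j≠m} (ω − Ω_j♯)/(Ω_m♯ − Ω_j♯). Then: (i) there exists a constant C > 0, depending only on n and on the ratio D/d♯, such that for every δ ∈ (0, d♯/8] and every choice of points Ω₀, …, Ω_n ∈ ℂ with |Ω_j − Ω_j♯| ≤ δ for all j, and every m, one has |G_m(Ω_m) − 1| ≤ C·δ/d♯ and |G_m(Ω_j)| ≤ C·δ/d♯ for all j ≠ m; (ii) for all σ, η ∈ ℝ and all m, |G_m(σ + iη)| ≤ d♯^{−n}·(|σ| + |η| + max_j |Ω_j♯|)^n. -/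
/-!
Each factor of `G_m(Ω_m)` is `1 + (Ω_m - Ω_m♯) / (Ω_m♯ - Ω_j♯)`, within `δ/d` of `1`, so the
product is within `(1 + δ/d)^n - 1 = O(δ/d)` of `1`. For `j ≠ m`, `G_m(Ω_j)` contains the factor
`(Ω_j - Ω_j♯) / (Ω_m♯ - Ω_j♯)` of size at most `δ/d`, while every other factor has a numerator of
size at most `δ + D ≤ (D/d + 1) d`. Part (ii) bounds each numerator by `|σ| + |η| + max_j |Ω_j♯|`.
-/

open Finset

theorem norm_prod_sub_one_le {ι R : Type*} [SeminormedCommRing R] [NormOneClass R]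
    (s : Finset ι) (f : ι → R) {t : ℝ} (ht : 0 ≤ t) (h : ∀ j ∈ s, ‖f j - 1‖ ≤ t) :
    ‖∏ j ∈ s, f j - 1‖ ≤ (1 + t) ^ s.card - 1 := by
  classical
  induction s using Finset.induction_on with
  | empty => simp
  | @insert a s ha ih =>
    have ih := ih fun j hj => h j (mem_insert_of_mem hj)
    have hprod : ‖∏ j ∈ s, f j‖ ≤ (1 + t) ^ s.card := by
      linarith [norm_le_insert' (∏ j ∈ s, f j) 1, norm_one (α := R)]
    rw [prod_insert ha, card_insert_of_notMem ha]
    calc ‖f a * ∏ j ∈ s, f j - 1‖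
        = ‖(f a - 1) * ∏ j ∈ s, f j + (∏ j ∈ s, f j - 1)‖ := by
          congr 1; ring
      _ ≤ ‖f a - 1‖ * ‖∏ j ∈ s, f j‖ + ‖∏ j ∈ s, f j - 1‖ :=
        (norm_add_le _ _).trans (add_le_add_left (norm_mul_le _ _) _)
      _ ≤ t * (1 + t) ^ s.card + ((1 + t) ^ s.card - 1) := by
        gcongr
        exact h a (mem_insert_self a s)
      _ = (1 + t) ^ (s.card + 1) - 1 := by ring

theorem one_add_pow_sub_one_le {t : ℝ} (ht : 0 ≤ t) (ht₁ : t ≤ 1) (n : ℕ) :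
    (1 + t) ^ n - 1 ≤ n * 2 ^ n * t := by
  rw [← geom_sum_mul, add_sub_cancel_left]
  gcongr
  calc ∑ i ∈ range n, (1 + t) ^ i ≤ ∑ _i ∈ range n, (2 : ℝ) ^ n :=
        sum_le_sum fun i hi => (pow_le_pow_left₀ (by linarith) (by linarith) i).trans
          (pow_le_pow_right₀ one_le_two (mem_range.1 hi).le)
    _ = n * 2 ^ n := by simp

theorem norm_div_le_div_of_le {𝕜 : Type*} [NormedDivisionRing 𝕜] {a b : 𝕜} {R d : ℝ}
    (hR : 0 ≤ R) (hd : 0 < d) (ha : ‖a‖ ≤ R) (hb : d ≤ ‖b‖) : ‖a / b‖ ≤ R / d := by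
  rw [norm_div]
  exact div_le_div₀ hR ha hd hb

theorem norm_prod_div_le_pow {ι 𝕜 : Type*} [NormedField 𝕜] (s : Finset ι) {f g : ι → 𝕜}
    {R d : ℝ} (hR : 0 ≤ R) (hd : 0 < d) (hf : ∀ j ∈ s, ‖f j‖ ≤ R) (hg : ∀ j ∈ s, d ≤ ‖g j‖) :
    ‖∏ j ∈ s, f j / g j‖ ≤ (R / d) ^ s.card := by
  rw [norm_prod, ← prod_const]
  exact prod_le_prod (fun _ _ => norm_nonneg _)
    fun j hj => norm_div_le_div_of_le hR hd (hf j hj) (hg j hj)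

section LagrangeBasis

variable {ι 𝕜 : Type*} [Fintype ι] [DecidableEq ι] [NormedField 𝕜] {x : ι → 𝕜} {d : ℝ}

theorem card_erase_univ (m : ι) : (univ.erase m).card = Fintype.card ι - 1 := by
  rw [card_erase_of_mem (mem_univ m), card_univ]

theorem norm_prod_erase_div_sub_one_le (hd : 0 < d)
    (hsep : ∀ j k, j ≠ k → d ≤ ‖x j - x k‖) {m : ι} {y : 𝕜} {δ : ℝ} (hδ : 0 ≤ δ)
    (hy : ‖y - x m‖ ≤ δ) :
    ‖∏ j ∈ univ.erase m, (y - x j) / (x m - x j) - 1‖ ≤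
      (1 + δ / d) ^ (Fintype.card ι - 1) - 1 := by
  have hfactor : ∀ j ∈ univ.erase m, ‖(y - x j) / (x m - x j) - 1‖ ≤ δ / d := by
    intro j hj
    have hden := hsep m j (ne_of_mem_erase hj).symm
    rw [div_sub_one (norm_pos_iff.1 (hd.trans_le hden)), sub_sub_sub_cancel_right]
    exact norm_div_le_div_of_le hδ hd hy hden
  rw [← card_erase_univ m]
  exact norm_prod_sub_one_le _ _ (div_nonneg hδ hd.le) hfactor

theorem norm_prod_erase_div_le_of_ne (hd : 0 < d)
    (hsep : ∀ j k, j ≠ k → d ≤ ‖x j - x k‖) {r : ℝ} (hr : 0 ≤ r)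
    (hdiam : ∀ j k, ‖x j - x k‖ ≤ r * d) {m j : ι} (hjm : j ≠ m) {y : 𝕜} {δ : ℝ}
    (hδ : 0 ≤ δ) (hδd : δ ≤ d) (hy : ‖y - x j‖ ≤ δ) :
    ‖∏ k ∈ univ.erase m, (y - x k) / (x m - x k)‖ ≤ δ / d * (r + 1) ^ (Fintype.card ι - 1) := by
  rw [← mul_prod_erase _ _ (mem_erase.2 ⟨hjm, mem_univ j⟩), norm_mul]
  have hnum : ∀ k ∈ (univ.erase m).erase j, ‖y - x k‖ ≤ (r + 1) * d := fun k _ => by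
    linarith [norm_sub_le_norm_sub_add_norm_sub y (x j) (x k), hdiam j k]
  have hden : ∀ k ∈ (univ.erase m).erase j, d ≤ ‖x m - x k‖ := fun k hk =>
    hsep m k (ne_of_mem_erase (mem_of_mem_erase hk)).symm
  have hrest : ‖∏ k ∈ (univ.erase m).erase j, (y - x k) / (x m - x k)‖ ≤
      (r + 1) ^ (Fintype.card ι - 1) :=
    calc _ ≤ ((r + 1) * d / d) ^ ((univ.erase m).erase j).card :=
          norm_prod_div_le_pow _ (by positivity) hd hnum hden
      _ = (r + 1) ^ ((univ.erase m).erase j).card := by rw [mul_div_cancel_right₀ _ hd.ne']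
      _ ≤ (r + 1) ^ (Fintype.card ι - 1) :=
          pow_le_pow_right₀ (by linarith) (card_erase_le.trans_eq (card_erase_univ m))
  exact mul_le_mul (norm_div_le_div_of_le hδ hd hy (hsep m j hjm.symm)) hrest
    (norm_nonneg _) (by positivity)

theorem norm_prod_erase_div_le_pow (hd : 0 < d) (hsep : ∀ j k, j ≠ k → d ≤ ‖x j - x k‖)
    (m : ι) {y : 𝕜} {M : ℝ} (hy : ∀ j, ‖y - x j‖ ≤ M) :
    ‖∏ j ∈ univ.erase m, (y - x j) / (x m - x j)‖ ≤ (M / d) ^ (Fintype.card ι - 1) := by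
  rw [← card_erase_univ m]
  exact norm_prod_div_le_pow _ ((norm_nonneg _).trans (hy m)) hd (fun j _ => hy j)
    fun j hj => hsep m j (ne_of_mem_erase hj).symm

end LagrangeBasis

theorem norm_ofReal_add_ofReal_mul_I_sub_le (σ η : ℝ) (w : ℂ) :
    ‖(σ : ℂ) + η * Complex.I - w‖ ≤ |σ| + |η| + ‖w‖ := by
  have hz : ‖(σ : ℂ) + η * Complex.I‖ ≤ |σ| + |η| := by
    simpa using norm_add_le (σ : ℂ) (η * Complex.I)
  linarith [norm_sub_le ((σ : ℂ) + η * Complex.I) w]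

/-- Robust pole selection by Lagrange interpolation at pseudopoles:
(i) stability of the interpolation identities under node perturbation,
(ii) polynomial growth of the Lagrange weights on horizontal lines. -/
theorem lagrange_pseudopole_interpolation (n : ℕ) :
    -- (i) robustness, with a constant depending only on n and the ratio D/d
    (∀ r : ℝ, 0 < r → ∃ C : ℝ, 0 < C ∧
      ∀ (Ωs : Fin (n + 1) → ℂ) (d D : ℝ), 0 < d →
        (∀ j k : Fin (n + 1), j ≠ k → d ≤ norm (Ωs j - Ωs k)) →
        (∀ j k : Fin (n + 1), norm (Ωs j - Ωs k) ≤ D) → D ≤ r * d →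
        ∀ δ : ℝ, 0 < δ → δ ≤ d / 8 →
        ∀ Ω : Fin (n + 1) → ℂ, (∀ j, norm (Ω j - Ωs j) ≤ δ) →
        ∀ m : Fin (n + 1),
          norm
              ((∏ j ∈ Finset.univ.erase m, (Ω m - Ωs j) / (Ωs m - Ωs j)) - 1)
            ≤ C * δ / d ∧
          ∀ j : Fin (n + 1), j ≠ m →
            norm
                (∏ k ∈ Finset.univ.erase m, (Ω j - Ωs k) / (Ωs m - Ωs k))
              ≤ C * δ / d) ∧
    -- (ii) growth bound on horizontal lines
    (∀ (Ωs : Fin (n + 1) → ℂ), Function.Injective Ωs →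
      ∀ d : ℝ, 0 < d →
        (∀ j k : Fin (n + 1), j ≠ k → d ≤ norm (Ωs j - Ωs k)) →
        ∀ σ η : ℝ, ∀ m : Fin (n + 1),
          norm
              (∏ j ∈ Finset.univ.erase m,
                (((σ : ℂ) + (η : ℂ) * Complex.I) - Ωs j) / (Ωs m - Ωs j))
            ≤ (1 / d) ^ n *
              (|σ| + |η| +
                Finset.univ.sup' Finset.univ_nonempty
                  (fun j => norm (Ωs j))) ^ n) := by
  refine ⟨fun r hr => ⟨n * 2 ^ n + (r + 1) ^ n, by positivity, ?_⟩, ?_⟩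
  · intro Ωs d D hd hsep hdiam hDr δ hδ hδd Ω hΩ m
    have hδd₁ : δ / d ≤ 1 := (div_le_one hd).2 (by linarith)
    refine ⟨?_, fun j hjm => ?_⟩
    · have hself := norm_prod_erase_div_sub_one_le hd hsep hδ.le (hΩ m)
      rw [Fintype.card_fin, add_tsub_cancel_right] at hself
      calc _ ≤ n * 2 ^ n * (δ / d) := hself.trans (one_add_pow_sub_one_le (by positivity) hδd₁ n)
        _ ≤ _ := by
          rw [mul_div_assoc]
          gcongr
          exact le_add_of_nonneg_right (by positivity)
    · have hother := norm_prod_erase_div_le_of_ne hd hsep hr.le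
        (fun j k => (hdiam j k).trans hDr) hjm hδ.le (by linarith) (hΩ j)
      rw [Fintype.card_fin, add_tsub_cancel_right] at hother
      calc _ ≤ δ / d * (r + 1) ^ n := hother
        _ ≤ _ := by
          rw [mul_div_assoc, mul_comm]
          gcongr
          exact le_add_of_nonneg_left (by positivity)
  · intro Ωs _ d hd hsep σ η m
    have hgrowth := norm_prod_erase_div_le_pow hd hsep m
      (M := |σ| + |η| + univ.sup' univ_nonempty fun j => ‖Ωs j‖) fun j =>
        (norm_ofReal_add_ofReal_mul_I_sub_le σ η (Ωs j)).trans
          (add_le_add_right (le_sup' (fun j => ‖Ωs j‖) (mem_univ j)) _)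
    rw [Fintype.card_fin, add_tsub_cancel_right] at hgrowth
    exact hgrowth.trans_eq (by rw [div_eq_inv_mul, mul_pow, one_div, inv_pow])
end

section
/- Let S ⊆ ℂ, and let ν > 0, C > 0, p ≥ 0, C_p > 0 be such that for every R ≥ 1 the set {s ∈ S : |Re s| ≤ R and −ν ≤ Im s ≤ C} is finite with cardinality at most C_p·(1+R)^p. Fix a real A > p + 2. Then there exists a sequence (R_n) of positive reals with R_n → ∞ such that for every n and every s ∈ S with −ν ≤ Im s ≤ C, one has |Re s − R_n| ≥ (1+R_n)^{−A} and |Re s + R_n| ≥ (1+R_n)^{−A}. -/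
open MeasureTheory
open scoped ENNReal

lemma exists_good_radius (T : Set ℂ) (hT : T.Finite) (a ε : ℝ) (hε : 0 ≤ ε)
    (hlt : (hT.toFinset.card : ℝ) * (4 * ε) < 1) :
    ∃ R ∈ Set.Icc a (a + 1), ∀ s ∈ T, ε ≤ |s.re - R| ∧ ε ≤ |s.re + R| := by
  by_contra h
  push_neg at h
  have hsub : Set.Icc a (a + 1) ⊆
      ⋃ s ∈ hT.toFinset, (Metric.ball s.re ε ∪ Metric.ball (-s.re) ε) := by
    intro R hR
    obtain ⟨s, hs, hs2⟩ := h R hR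
    refine Set.mem_biUnion (hT.mem_toFinset.2 hs) ?_
    rcases lt_or_ge |s.re - R| ε with h1 | h1
    · left
      simpa [Real.dist_eq, abs_sub_comm] using h1
    · right
      have h2 := hs2 h1
      simp only [Metric.mem_ball, Real.dist_eq]
      rwa [show R - -s.re = s.re + R by ring]
  have h1 : (1 : ℝ≥0∞) ≤ volume (⋃ s ∈ hT.toFinset,
      (Metric.ball s.re ε ∪ Metric.ball (-s.re) ε)) := by
    have := measure_mono (μ := volume) hsub
    rwa [Real.volume_Icc, show a + 1 - a = 1 by ring, ENNReal.ofReal_one] at this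
  have h2 : volume (⋃ s ∈ hT.toFinset,
      (Metric.ball s.re ε ∪ Metric.ball (-s.re) ε)) ≤
      hT.toFinset.card • ENNReal.ofReal (4 * ε) := by
    refine le_trans (measure_biUnion_finset_le _ _) ?_
    refine Finset.sum_le_card_nsmul _ _ _ ?_
    intro s _
    refine le_trans (measure_union_le _ _) ?_
    rw [Real.volume_ball, Real.volume_ball,
      ← ENNReal.ofReal_add (by linarith) (by linarith)]
    exact ENNReal.ofReal_le_ofReal (by linarith)
  have h3 : (1 : ℝ≥0∞) ≤ ENNReal.ofReal ((hT.toFinset.card : ℝ) * (4 * ε)) := by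
    refine le_trans (h1.trans h2) ?_
    rw [nsmul_eq_mul, ENNReal.ofReal_mul (Nat.cast_nonneg _),
      ENNReal.ofReal_natCast]
  rw [ENNReal.one_le_ofReal] at h3
  linarith

/-- Pole-avoiding truncation radii: under a polynomial counting bound for a
set of resonances in a horizontal strip, there is a sequence of truncation
radii tending to infinity whose vertical lines keep a quantified distance
`(1+Rₙ)^{-A}` from the real parts of all resonances in the strip. -/
theorem pole_avoiding_truncation_radii
    (S : Set ℂ) (ν C p Cp A : ℝ)
    (hν : 0 < ν) (hC : 0 < C) (hp : 0 ≤ p) (hCp : 0 < Cp)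
    (hcount : ∀ R : ℝ, 1 ≤ R →
      {s ∈ S | |s.re| ≤ R ∧ -ν ≤ s.im ∧ s.im ≤ C}.Finite ∧
      ({s ∈ S | |s.re| ≤ R ∧ -ν ≤ s.im ∧ s.im ≤ C}.ncard : ℝ) ≤ Cp * (1 + R) ^ p)
    (hA : p + 2 < A) :
    ∃ R : ℕ → ℝ, (∀ n, 0 < R n) ∧
      Filter.Tendsto R Filter.atTop Filter.atTop ∧
      ∀ n, ∀ s ∈ S, -ν ≤ s.im → s.im ≤ C →
        (1 + R n) ^ (-A) ≤ |s.re - R n| ∧ (1 + R n) ^ (-A) ≤ |s.re + R n| := by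
  have hA2 : (0 : ℝ) < A := by linarith
  have hAp : (0 : ℝ) < A - p := by linarith
  obtain ⟨N, hN⟩ : ∃ N : ℕ, 4 * Cp * 3 ^ p < ((N : ℝ) + 2) ^ (A - p) := by
    have h1 : Filter.Tendsto (fun x : ℝ => x ^ (A - p)) Filter.atTop Filter.atTop :=
      tendsto_rpow_atTop hAp
    have h2 : Filter.Tendsto (fun N : ℕ => ((N : ℝ) + 2)) Filter.atTop Filter.atTop :=
      Filter.tendsto_atTop_add_const_right _ 2 tendsto_natCast_atTop_atTop
    exact ((h1.comp h2).eventually_gt_atTop (4 * Cp * 3 ^ p)).exists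
  have key : ∀ n : ℕ, ∃ R ∈ Set.Icc ((n : ℝ) + N + 1) ((n : ℝ) + N + 1 + 1),
      ∀ s ∈ {s ∈ S | |s.re| ≤ ((n : ℝ) + N + 1) + 2 ∧ -ν ≤ s.im ∧ s.im ≤ C},
        (1 + ((n : ℝ) + N + 1)) ^ (-A) ≤ |s.re - R| ∧
        (1 + ((n : ℝ) + N + 1)) ^ (-A) ≤ |s.re + R| := by
    intro n
    set a : ℝ := (n : ℝ) + N + 1 with ha
    have ha1 : (1 : ℝ) ≤ a := by
      rw [ha]
      have h1 := Nat.cast_nonneg (α := ℝ) n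
      have h2 := Nat.cast_nonneg (α := ℝ) N
      linarith
    have ha0 : (0 : ℝ) < 1 + a := by linarith
    obtain ⟨hfin, hcard⟩ := hcount (a + 2) (by linarith)
    set ε : ℝ := (1 + a) ^ (-A) with hε
    have hεpos : 0 < ε := Real.rpow_pos_of_pos ha0 _
    refine exists_good_radius _ hfin a ε hεpos.le ?_
    have hc : (hfin.toFinset.card : ℝ) ≤ Cp * (1 + (a + 2)) ^ p := by
      rwa [← Set.ncard_eq_toFinset_card _ hfin]
    have h3 : (1 + (a + 2) : ℝ) ^ p ≤ 3 ^ p * (1 + a) ^ p := by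
      rw [← Real.mul_rpow (by norm_num) ha0.le]
      exact Real.rpow_le_rpow (by linarith) (by linarith) hp
    have h4 : ((N : ℝ) + 2) ^ (A - p) ≤ (1 + a) ^ (A - p) :=
      Real.rpow_le_rpow (by positivity)
        (by rw [ha]; push_cast; linarith [Nat.cast_nonneg (α := ℝ) n]) hAp.le
    have hX : 0 < (1 + a) ^ (A - p) := Real.rpow_pos_of_pos ha0 _
    have hinv : (1 + a : ℝ) ^ (p - A) = ((1 + a) ^ (A - p))⁻¹ := by
      rw [show p - A = -(A - p) by ring, Real.rpow_neg ha0.le]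
    have hmain : 4 * Cp * 3 ^ p * (1 + a) ^ (p - A) < 1 := by
      rw [hinv, ← div_eq_mul_inv, div_lt_one hX]
      exact lt_of_lt_of_le hN h4
    calc (hfin.toFinset.card : ℝ) * (4 * ε)
        ≤ (Cp * (1 + (a + 2)) ^ p) * (4 * ε) :=
          mul_le_mul_of_nonneg_right hc (by positivity)
      _ ≤ (Cp * (3 ^ p * (1 + a) ^ p)) * (4 * ε) :=
          mul_le_mul_of_nonneg_right (mul_le_mul_of_nonneg_left h3 hCp.le) (by positivity)
      _ = 4 * Cp * 3 ^ p * ((1 + a) ^ p * (1 + a) ^ (-A)) := by rw [hε]; ring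
      _ = 4 * Cp * 3 ^ p * (1 + a) ^ (p - A) := by
          rw [← Real.rpow_add ha0, show p + -A = p - A by ring]
      _ < 1 := hmain
  choose Rf hmem hgood using key
  refine ⟨Rf, ?_, ?_, ?_⟩
  · intro n
    have := (hmem n).1
    have hn : (0 : ℝ) ≤ (n : ℝ) + N := by positivity
    linarith
  · refine Filter.tendsto_atTop_mono (fun n => ?_) tendsto_natCast_atTop_atTop
    have := (hmem n).1
    have hn : (0 : ℝ) ≤ (N : ℝ) := Nat.cast_nonneg _
    linarith
  · intro n s hs h1 h2
    set a : ℝ := (n : ℝ) + N + 1 with ha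
    have ha1 : (1 : ℝ) ≤ a := by
      rw [ha]
      have h1 := Nat.cast_nonneg (α := ℝ) n
      have h2 := Nat.cast_nonneg (α := ℝ) N
      linarith
    obtain ⟨hRa, hRb⟩ := hmem n
    have hR0 : (0 : ℝ) < Rf n := by linarith
    by_cases hre : |s.re| ≤ a + 2
    · have hT : s ∈ {s ∈ S | |s.re| ≤ a + 2 ∧ -ν ≤ s.im ∧ s.im ≤ C} :=
        ⟨hs, hre, h1, h2⟩
      obtain ⟨g1, g2⟩ := hgood n s hT
      have hmono : (1 + Rf n) ^ (-A) ≤ (1 + a) ^ (-A) :=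
        Real.rpow_le_rpow_of_nonpos (by linarith) (by linarith) (by linarith)
      exact ⟨hmono.trans g1, hmono.trans g2⟩
    · push_neg at hre
      have hone : (1 + Rf n : ℝ) ^ (-A) ≤ 1 :=
        Real.rpow_le_one_of_one_le_of_nonpos (by linarith) (by linarith)
      have hd1 : (1 : ℝ) ≤ |s.re - Rf n| := by
        have := abs_sub_abs_le_abs_sub s.re (Rf n)
        have hRabs : |Rf n| = Rf n := abs_of_pos hR0
        rw [hRabs] at this
        linarith
      have hd2 : (1 : ℝ) ≤ |s.re + Rf n| := by
        have := abs_sub_abs_le_abs_sub s.re (-(Rf n))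
        rw [abs_neg, abs_of_pos hR0, sub_neg_eq_add] at this
        linarith
      exact ⟨hone.trans hd1, hone.trans hd2⟩
end

section
/- Let X and Y be complex Banach spaces, U ⊆ ℂ open, and ω₀ ∈ U. Let P : U → L(X,Y) be analytic, let Π ∈ L(Y,X) with Π ≠ 0, and let R₀ : U → L(Y,X) be analytic; for ω ∈ U ∖ {ω₀} set R(ω) := (ω−ω₀)^{−1}·Π + R₀(ω), and assume P(ω) ∘ R(ω) = id_Y and R(ω) ∘ P(ω) = id_X for all ω ∈ U ∖ {ω₀}. Assume further that there exist u₀ ∈ X ∖ {0} and a continuous linear functional v₀ ∈ Y* ∖ {0} such that ker P(ω₀) = ℂ·u₀ and {v ∈ Y* : v ∘ P(ω₀) = 0} = ℂ·v₀. Then ⟨P′(ω₀)u₀, v₀⟩ ≠ 0, and for every f ∈ Y one has Π f = (⟨f, v₀⟩ / ⟨P′(ω₀)u₀, v₀⟩) · u₀, where P′(ω₀) denotes the derivative of the analytic family P at ω₀ and ⟨·,·⟩ the duality pairing between Y and Y*. In particular, the range of Π equals ℂ·u₀. -/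
/-!
Multiplying `P(ω) R(ω) = I` by `ω - ω₀` gives `P(ω) Π = (ω - ω₀) (I - P(ω) R₀(ω))` near `ω₀`.
At `ω₀` this says `P(ω₀) Π = 0`, so `Π` takes values in `ker P(ω₀) = ℂ u₀`, and differentiating
gives `P'(ω₀) Π = I - P(ω₀) R₀(ω₀)`. Since `v₀` kills the range of `P(ω₀)`, pairing with `v₀`
yields `⟨P'(ω₀) Π f, v₀⟩ = ⟨f, v₀⟩`; writing `Π f = c u₀` this reads `c ⟨P'(ω₀) u₀, v₀⟩ = ⟨f, v₀⟩`,
which determines `c` and, as `v₀ ≠ 0`, forces `⟨P'(ω₀) u₀, v₀⟩ ≠ 0`.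
-/

open Filter Topology

section Factorization

variable {𝕜 E : Type*} [NontriviallyNormedField 𝕜] [NormedAddCommGroup E] [NormedSpace 𝕜 E]
  {f g : 𝕜 → E} {z₀ : 𝕜}

theorem eq_zero_of_eventually_eq_sub_smul (hf : ContinuousAt f z₀) (hg : ContinuousAt g z₀)
    (h : ∀ᶠ z in 𝓝[≠] z₀, f z = (z - z₀) • g z) : f z₀ = 0 := by
  have hlim : Tendsto (fun z => (z - z₀) • g z) (𝓝[≠] z₀) (𝓝 0) := by
    have := ((continuous_sub_right z₀).continuousAt.smul hg).tendsto
    simp only [Pi.smul_apply', sub_self, zero_smul] at this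
    exact this.mono_left nhdsWithin_le_nhds
  exact tendsto_nhds_unique_of_eventuallyEq (hf.tendsto.mono_left nhdsWithin_le_nhds) hlim h

theorem hasDerivAt_of_eventually_eq_sub_smul (hf : ContinuousAt f z₀) (hg : ContinuousAt g z₀)
    (h : ∀ᶠ z in 𝓝[≠] z₀, f z = (z - z₀) • g z) : HasDerivAt f (g z₀) z₀ := by
  have hf₀ := eq_zero_of_eventually_eq_sub_smul hf hg h
  rw [hasDerivAt_iff_tendsto_slope]
  refine (hg.tendsto.mono_left nhdsWithin_le_nhds).congr' ?_
  filter_upwards [h, self_mem_nhdsWithin] with z hz hne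
  rw [slope_def_module, hf₀, sub_zero, hz, smul_smul,
    inv_mul_cancel₀ (sub_ne_zero.mpr hne), one_smul]

end Factorization

namespace ContinuousLinearMap

variable {𝕜 M N : Type*} [Field 𝕜] [TopologicalSpace M] [AddCommGroup M] [Module 𝕜 M]
  [ContinuousAdd M] [ContinuousConstSMul 𝕜 M] [TopologicalSpace N] [AddCommGroup N]
  [Module 𝕜 N] [IsTopologicalAddGroup N] [ContinuousConstSMul 𝕜 N]

theorem comp_eq_smul_sub_of_comp_inv_smul_add_eq_id {A : M →L[𝕜] N} {R B : N →L[𝕜] M} {s : 𝕜}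
    (hs : s ≠ 0) (h : A.comp (s⁻¹ • R + B) = ContinuousLinearMap.id 𝕜 N) :
    A.comp R = s • (ContinuousLinearMap.id 𝕜 N - A.comp B) := by
  rw [← h, comp_add, comp_smul, add_sub_cancel_right, smul_smul, mul_inv_cancel₀ hs, one_smul]

end ContinuousLinearMap

namespace LinearMap

variable {K M N : Type*} [Field K] [AddCommGroup M] [Module K M] [AddCommGroup N] [Module K N]
  {R : M →ₗ[K] N} {φ : M →ₗ[K] K} {ψ : N →ₗ[K] K} {u : N}

theorem apply_ne_zero_of_comp_eq_of_range_le_span_singleton (hR : range R ≤ K ∙ u)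
    (hψR : ψ ∘ₗ R = φ) (hφ : φ ≠ 0) : ψ u ≠ 0 := by
  refine fun hu => hφ (ext fun f => ?_)
  obtain ⟨c, hc⟩ := Submodule.mem_span_singleton.1 (hR (mem_range_self R f))
  rw [← hψR, comp_apply, ← hc, map_smul, hu, smul_zero, zero_apply]

theorem eq_div_smul_of_comp_eq_of_range_le_span_singleton (hR : range R ≤ K ∙ u)
    (hψR : ψ ∘ₗ R = φ) (hu : ψ u ≠ 0) (f : M) : R f = (φ f / ψ u) • u := by
  obtain ⟨c, hc⟩ := Submodule.mem_span_singleton.1 (hR (mem_range_self R f))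
  rw [← hψR, comp_apply, ← hc, map_smul, smul_eq_mul, mul_div_cancel_right₀ _ hu]

theorem range_eq_span_singleton_of_comp_eq (hR : range R ≤ K ∙ u)
    (hψR : ψ ∘ₗ R = φ) (hφ : φ ≠ 0) : range R = K ∙ u := by
  have hu := apply_ne_zero_of_comp_eq_of_range_le_span_singleton hR hψR hφ
  obtain ⟨g, hg⟩ : ∃ g, φ g ≠ 0 := by
    by_contra! h
    exact hφ (ext h)
  refine le_antisymm hR (Submodule.span_singleton_le_iff_mem _ _ |>.2 ⟨(ψ u / φ g) • g, ?_⟩)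
  rw [map_smul, eq_div_smul_of_comp_eq_of_range_le_span_singleton hR hψR hu, smul_smul,
    div_mul_div_cancel₀ hg, div_self hu, one_smul]

end LinearMap

section SimplePole

variable {𝕜 E F : Type*} [NontriviallyNormedField 𝕜] [NormedAddCommGroup E] [NormedSpace 𝕜 E]
  [NormedAddCommGroup F] [NormedSpace 𝕜 F] {P : 𝕜 → E →L[𝕜] F} {R₀ : 𝕜 → F →L[𝕜] E}
  {Res : F →L[𝕜] E} {z₀ : 𝕜}

theorem eventually_comp_residue_eq_sub_smul
    (h : ∀ᶠ z in 𝓝[≠] z₀, (P z).comp ((z - z₀)⁻¹ • Res + R₀ z) = ContinuousLinearMap.id 𝕜 F) :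
    ∀ᶠ z in 𝓝[≠] z₀,
      (P z).comp Res = (z - z₀) • (ContinuousLinearMap.id 𝕜 F - (P z).comp (R₀ z)) := by
  filter_upwards [h, self_mem_nhdsWithin] with z hz hne
  exact ContinuousLinearMap.comp_eq_smul_sub_of_comp_inv_smul_add_eq_id (sub_ne_zero.2 hne) hz

theorem comp_residue_eq_zero_of_comp_eq_id (hP : DifferentiableAt 𝕜 P z₀)
    (hR₀ : ContinuousAt R₀ z₀)
    (h : ∀ᶠ z in 𝓝[≠] z₀, (P z).comp ((z - z₀)⁻¹ • Res + R₀ z) = ContinuousLinearMap.id 𝕜 F) :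
    (P z₀).comp Res = 0 :=
  eq_zero_of_eventually_eq_sub_smul (f := fun z => (P z).comp Res)
    (hP.continuousAt.clm_comp continuousAt_const)
    (continuousAt_const.sub (hP.continuousAt.clm_comp hR₀))
    (eventually_comp_residue_eq_sub_smul h)

theorem deriv_comp_residue_of_comp_eq_id (hP : DifferentiableAt 𝕜 P z₀)
    (hR₀ : ContinuousAt R₀ z₀)
    (h : ∀ᶠ z in 𝓝[≠] z₀, (P z).comp ((z - z₀)⁻¹ • Res + R₀ z) = ContinuousLinearMap.id 𝕜 F) :
    (deriv P z₀).comp Res = ContinuousLinearMap.id 𝕜 F - (P z₀).comp (R₀ z₀) := by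
  have hPRes := hP.hasDerivAt.clm_comp (hasDerivAt_const z₀ Res)
  simpa using hPRes.unique <| hasDerivAt_of_eventually_eq_sub_smul hPRes.continuousAt
    (continuousAt_const.sub (hP.continuousAt.clm_comp hR₀)) (eventually_comp_residue_eq_sub_smul h)

end SimplePole

theorem rank_one_residue_at_simple_pole_general
    {X Y : Type*} [NormedAddCommGroup X] [NormedSpace ℂ X]
    [NormedAddCommGroup Y] [NormedSpace ℂ Y]
    (U : Set ℂ) (hU : IsOpen U) (ω₀ : ℂ) (hω₀ : ω₀ ∈ U)
    (P : ℂ → (X →L[ℂ] Y)) (hP : ∀ ω ∈ U, AnalyticAt ℂ P ω)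
    (Pr : Y →L[ℂ] X)
    (R₀ : ℂ → (Y →L[ℂ] X)) (hR₀ : ∀ ω ∈ U, AnalyticAt ℂ R₀ ω)
    (hPR : ∀ ω ∈ U \ {ω₀},
      (P ω).comp (((ω - ω₀)⁻¹ • Pr) + R₀ ω) = ContinuousLinearMap.id ℂ Y)
    (u₀ : X) (v₀ : Y →L[ℂ] ℂ) (hv₀ : v₀ ≠ 0)
    (hker : LinearMap.ker (P ω₀ : X →ₗ[ℂ] Y) = Submodule.span ℂ {u₀})
    (hcoker : {v : Y →L[ℂ] ℂ | v.comp (P ω₀) = 0} = {v | ∃ c : ℂ, v = c • v₀}) :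
    v₀ ((deriv P ω₀) u₀) ≠ 0 ∧
    (∀ f : Y, Pr f = (v₀ f / v₀ ((deriv P ω₀) u₀)) • u₀) ∧
    Set.range (⇑Pr) = {x : X | ∃ c : ℂ, x = c • u₀} := by
  have hPR' : ∀ᶠ ω in 𝓝[≠] ω₀,
      (P ω).comp ((ω - ω₀)⁻¹ • Pr + R₀ ω) = ContinuousLinearMap.id ℂ Y :=
    eventually_of_mem (sdiff_mem_nhdsWithin_compl (hU.mem_nhds hω₀) {ω₀}) hPR
  have hP₀ := (hP ω₀ hω₀).differentiableAt
  have hR₀' := (hR₀ ω₀ hω₀).continuousAt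
  have hv₀P : v₀.comp (P ω₀) = 0 := by
    have : v₀ ∈ {v : Y →L[ℂ] ℂ | ∃ c : ℂ, v = c • v₀} := ⟨1, (one_smul ℂ v₀).symm⟩
    rwa [← hcoker] at this
  have hrange : LinearMap.range (Pr : Y →ₗ[ℂ] X) ≤ ℂ ∙ u₀ :=
    hker ▸ LinearMap.range_le_ker_iff.2
      (congrArg ContinuousLinearMap.toLinearMap (comp_residue_eq_zero_of_comp_eq_id hP₀ hR₀' hPR'))
  have hpair : (v₀.comp (deriv P ω₀) : X →ₗ[ℂ] ℂ) ∘ₗ Pr = (v₀ : Y →ₗ[ℂ] ℂ) := by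
    ext f
    simpa [← ContinuousLinearMap.comp_apply v₀ (P ω₀), hv₀P] using
      congrArg (fun T => v₀ (T f)) (deriv_comp_residue_of_comp_eq_id hP₀ hR₀' hPR')
  have hv₀' : (v₀ : Y →ₗ[ℂ] ℂ) ≠ 0 := by exact_mod_cast hv₀
  have hd : v₀ ((deriv P ω₀) u₀) ≠ 0 := by
    simpa using LinearMap.apply_ne_zero_of_comp_eq_of_range_le_span_singleton hrange hpair hv₀'
  refine ⟨hd, fun f => ?_, ?_⟩
  · simpa using
      LinearMap.eq_div_smul_of_comp_eq_of_range_le_span_singleton hrange hpair (by simpa using hd) f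
  · ext x
    simpa [Submodule.mem_span_singleton, eq_comm] using
      SetLike.ext_iff.1 (LinearMap.range_eq_span_singleton_of_comp_eq hrange hpair hv₀') x

/-- Rank-one structure of the residue of a meromorphic Fredholm inverse at a
simple pole: the residue projector is given by a pairing with the dual
resonant state. -/
theorem rank_one_residue_at_simple_pole
    {X Y : Type*} [NormedAddCommGroup X] [NormedSpace ℂ X]
    [NormedAddCommGroup Y] [NormedSpace ℂ Y]
    (U : Set ℂ) (hU : IsOpen U) (ω₀ : ℂ) (hω₀ : ω₀ ∈ U)
    (P : ℂ → (X →L[ℂ] Y)) (hP : ∀ ω ∈ U, AnalyticAt ℂ P ω)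
    (Pr : Y →L[ℂ] X) (hPr : Pr ≠ 0)
    (R₀ : ℂ → (Y →L[ℂ] X)) (hR₀ : ∀ ω ∈ U, AnalyticAt ℂ R₀ ω)
    (hPR : ∀ ω ∈ U \ {ω₀},
      (P ω).comp (((ω - ω₀)⁻¹ • Pr) + R₀ ω) = ContinuousLinearMap.id ℂ Y)
    (hRP : ∀ ω ∈ U \ {ω₀},
      ((((ω - ω₀)⁻¹ • Pr) + R₀ ω)).comp (P ω) = ContinuousLinearMap.id ℂ X)
    (u₀ : X) (hu₀ : u₀ ≠ 0) (v₀ : Y →L[ℂ] ℂ) (hv₀ : v₀ ≠ 0)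
    (hker : LinearMap.ker (P ω₀ : X →ₗ[ℂ] Y) = Submodule.span ℂ {u₀})
    (hcoker : {v : Y →L[ℂ] ℂ | v.comp (P ω₀) = 0} = {v | ∃ c : ℂ, v = c • v₀}) :
    v₀ ((deriv P ω₀) u₀) ≠ 0 ∧
    (∀ f : Y, Pr f = (v₀ f / v₀ ((deriv P ω₀) u₀)) • u₀) ∧
    Set.range (⇑Pr) = {x : X | ∃ c : ℂ, x = c • u₀} :=
  rank_one_residue_at_simple_pole_general U hU ω₀ hω₀ P hP Pr R₀ hR₀ hPR u₀ v₀ hv₀ hker hcoker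
end
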